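/- (Approximate OS-VI for policy evaluation, L_4(ρ) error propagation) If V_k = S^π V_{k-1} + ε_k with ‖ε_k‖_{4,ρ} ≤ ε for all k ≥ 1, and γ' = (γ/(1-γ)) √(Ĉ^π(ρ) χ²_ρ(P^π ‖ P̂^π)) < 1, then for all k ≥ 0: ‖V^π - V_k‖_{4,ρ} ≤ γ'^k ‖V^π - V_0‖_{4,ρ} + ((1-γ'^k)/(1-γ')) ε. -/

import Mathlib

/-!
With `N = (1 - γ P̂)⁻¹ = ∑ γᵗ P̂ᵗ`, an exact step has error `V^π - S^π V = γ N (P - P̂) (V^π - V)`.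
For `w = V^π - V`, Cauchy–Schwarz against `P̂` bounds `((P - P̂) w)(y)²` by the row χ²-divergence
times `(P̂ w²)(y)`; a second Cauchy–Schwarz along the row `N(x, ·)`, together with
`N(x, y) ≤ c(x) ρ(y) / (1 - γ)` (where `c(x) = max_y η̂(y|x)/ρ(y)`) and `γ N P̂ ≤ N`, gives
`(N (P - P̂) w)(x)⁴ ≤ c(x)³ (χ²_ρ)² ‖w‖⁴_{4,ρ} / (γ² (1 - γ)⁴)`. Averaging over `ρ`, where
`∑ ρ c³ = γ² Ĉ²`, shows that an exact step contracts the `L₄(ρ)` error by exactly `γ'`;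
Minkowski's inequality and induction on `k` then accumulate the errors `ε_k`.
-/

open Matrix

/-- A row-stochastic matrix: nonnegative entries, rows summing to one. -/
def RowStochastic {d : ℕ} (P : Matrix (Fin d) (Fin d) ℝ) : Prop :=
  (∀ i j, 0 ≤ P i j) ∧ ∀ i, ∑ j, P i j = 1

/-- The discounted future-state distribution
`η̂^π(y|x) = (1-γ) ∑_{t≥0} γ^t (P̂^π)^t(y|x)`. -/
noncomputable def eta {d : ℕ} (γ : ℝ) (Phat : Matrix (Fin d) (Fin d) ℝ)
    (x y : Fin d) : ℝ :=
  (1 - γ) * ∑' t : ℕ, γ ^ t * (Phat ^ t) x y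

/-- The weighted `L₄(ρ)` norm: `‖f‖_{4,ρ} = (∑_x ρ(x) f(x)⁴)^{1/4}`. -/
noncomputable def norm4 {d : ℕ} (ρ : Fin d → ℝ) (f : Fin d → ℝ) : ℝ :=
  (∑ x, ρ x * f x ^ 4) ^ ((1 : ℝ) / 4)

/-- The squared concentrability coefficient
`Ĉ^π(ρ)² = (1/γ²) ∑_x ρ(x) (max_y η̂^π(y|x)/ρ(y))³`. -/
noncomputable def Csq {d : ℕ} (γ : ℝ) (Phat : Matrix (Fin d) (Fin d) ℝ)
    (ρ : Fin d → ℝ) : ℝ :=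
  1 / γ ^ 2 * ∑ x, ρ x * (⨆ y, eta γ Phat x y / ρ y) ^ 3

/-- The weighted chi-squared divergence
`χ²_ρ(P^π ‖ P̂^π) = ∑_x ρ(x) ∑_y (P̂(y|x) - P(y|x))²/P̂(y|x)`. -/
noncomputable def chiSq {d : ℕ} (ρ : Fin d → ℝ)
    (P Phat : Matrix (Fin d) (Fin d) ℝ) : ℝ :=
  ∑ x, ρ x * ∑ y, (Phat x y - P x y) ^ 2 / Phat x y

/-- The Varga operator `S^π V = (I - γ P̂)⁻¹ (r + γ (P - P̂) V)`. -/
noncomputable def varga {d : ℕ} (γ : ℝ) (P Phat : Matrix (Fin d) (Fin d) ℝ)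
    (r V : Fin d → ℝ) : Fin d → ℝ :=
  ((1 - γ • Phat)⁻¹).mulVec (r + γ • ((P - Phat).mulVec V))

/-- The value function `V^π = (I - γ P)⁻¹ r`. -/
noncomputable def valueFn {d : ℕ} (γ : ℝ) (P : Matrix (Fin d) (Fin d) ℝ)
    (r : Fin d → ℝ) : Fin d → ℝ :=
  ((1 - γ • P)⁻¹).mulVec r

section Resolvent

variable {n : Type*} [Fintype n] [DecidableEq n] {γ : ℝ} {Q : Matrix n n ℝ}

theorem summable_smul_pow (hQ : Q ∈ rowStochastic ℝ n) (hγ0 : 0 ≤ γ) (hγ1 : γ < 1) :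
    Summable fun t : ℕ => (γ • Q) ^ t := by
  refine Pi.summable.2 fun x => Pi.summable.2 fun y => ?_
  simp only [smul_pow, Matrix.smul_apply, smul_eq_mul]
  have hQt (t : ℕ) : Q ^ t ∈ rowStochastic ℝ n := pow_mem hQ t
  exact Summable.of_nonneg_of_le
    (fun t => mul_nonneg (pow_nonneg hγ0 t) (nonneg_of_mem_rowStochastic (hQt t)))
    (fun t => mul_le_of_le_one_right (pow_nonneg hγ0 t) (le_one_of_mem_rowStochastic (hQt t)))
    (summable_geometric_of_lt_one hγ0 hγ1)

variable (hQ : Q ∈ rowStochastic ℝ n) (hγ0 : 0 ≤ γ) (hγ1 : γ < 1)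
include hQ hγ0 hγ1

theorem inv_one_sub_smul_eq_tsum : (1 - γ • Q)⁻¹ = ∑' t : ℕ, (γ • Q) ^ t :=
  inv_eq_left_inv (summable_smul_pow hQ hγ0 hγ1).tsum_pow_mul_one_sub

theorem isUnit_det_one_sub_smul : IsUnit (1 - γ • Q).det :=
  isUnit_det_of_left_inverse (summable_smul_pow hQ hγ0 hγ1).tsum_pow_mul_one_sub

theorem inv_one_sub_smul_apply (x y : n) :
    (1 - γ • Q)⁻¹ x y = ∑' t : ℕ, γ ^ t * (Q ^ t) x y := by
  have hsum := summable_smul_pow hQ hγ0 hγ1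
  have h := Pi.hasSum.1 (Pi.hasSum.1 hsum.hasSum x) y
  rw [inv_one_sub_smul_eq_tsum hQ hγ0 hγ1]
  simp only [smul_pow, Matrix.smul_apply, smul_eq_mul] at h ⊢
  exact h.tsum_eq.symm

theorem inv_one_sub_smul_nonneg (x y : n) : 0 ≤ (1 - γ • Q)⁻¹ x y := by
  rw [inv_one_sub_smul_apply hQ hγ0 hγ1]
  exact tsum_nonneg fun t =>
    mul_nonneg (pow_nonneg hγ0 t) (nonneg_of_mem_rowStochastic (pow_mem hQ t))

theorem sum_inv_one_sub_smul_apply (x : n) : ∑ y, (1 - γ • Q)⁻¹ x y = (1 - γ)⁻¹ := by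
  have hone : (1 - γ • Q) *ᵥ 1 = (1 - γ) • (1 : n → ℝ) := by
    rw [sub_mulVec, one_mulVec, smul_mulVec, one_vecMul_of_mem_rowStochastic hQ, sub_smul,
      one_smul]
  have h : (1 - γ) • ((1 - γ • Q)⁻¹ *ᵥ 1) = 1 := by
    rw [← mulVec_smul, ← hone, mulVec_mulVec,
      nonsing_inv_mul _ (isUnit_det_one_sub_smul hQ hγ0 hγ1), one_mulVec]
  have hx := congrFun h x
  simp only [Pi.smul_apply, smul_eq_mul, mulVec, dotProduct, Pi.one_apply, mul_one] at hx
  exact eq_inv_of_mul_eq_one_right hx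

theorem smul_inv_one_sub_smul_mul_le (x z : n) :
    γ * ((1 - γ • Q)⁻¹ * Q) x z ≤ (1 - γ • Q)⁻¹ x z := by
  have hinv := nonsing_inv_mul _ (isUnit_det_one_sub_smul hQ hγ0 hγ1)
  set N := (1 - γ • Q)⁻¹
  have h : N * (γ • Q) = N - 1 := by
    rw [← hinv, mul_sub, mul_one, sub_sub_cancel]
  have hxz := congrFun (congrFun h x) z
  rw [Matrix.mul_smul, Matrix.smul_apply, smul_eq_mul, Matrix.sub_apply] at hxz
  have h1 : (0 : ℝ) ≤ (1 : Matrix n n ℝ) x z := by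
    rw [one_apply]; split_ifs <;> norm_num
  linarith

theorem smul_sum_inv_one_sub_smul_mul_mulVec_le {v : n → ℝ} (hv : ∀ z, 0 ≤ v z) (x : n) :
    γ * ∑ y, (1 - γ • Q)⁻¹ x y * (Q *ᵥ v) y ≤ ∑ z, (1 - γ • Q)⁻¹ x z * v z := by
  have h : ∑ y, (1 - γ • Q)⁻¹ x y * (Q *ᵥ v) y = ∑ z, ((1 - γ • Q)⁻¹ * Q) x z * v z :=
    congrFun (mulVec_mulVec v _ Q) x
  rw [h, Finset.mul_sum]
  refine Finset.sum_le_sum fun z _ => ?_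
  rw [← mul_assoc]
  exact mul_le_mul_of_nonneg_right (smul_inv_one_sub_smul_mul_le hQ hγ0 hγ1 x z) (hv z)

theorem sq_sum_inv_one_sub_smul_mul_le (v : n → ℝ) (x : n) :
    (∑ z, (1 - γ • Q)⁻¹ x z * v z) ^ 2 ≤ (1 - γ)⁻¹ * ∑ z, (1 - γ • Q)⁻¹ x z * v z ^ 2 := by
  have hN := inv_one_sub_smul_nonneg hQ hγ0 hγ1 x
  rw [← sum_inv_one_sub_smul_apply hQ hγ0 hγ1 x]
  exact Finset.sum_sq_le_sum_mul_sum_of_sq_le_mul _ (fun z _ => hN z)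
    (fun z _ => mul_nonneg (hN z) (sq_nonneg _)) fun z _ => le_of_eq (by ring)

end Resolvent

noncomputable def chiSqRow {n : Type*} [Fintype n] (P Phat : Matrix n n ℝ) (y : n) : ℝ :=
  ∑ z, (Phat y z - P y z) ^ 2 / Phat y z

section ChiSquare

variable {n : Type*} [Fintype n] {P Phat : Matrix n n ℝ}

theorem chiSqRow_nonneg (hPhat : ∀ y z, 0 ≤ Phat y z) (y : n) : 0 ≤ chiSqRow P Phat y :=
  Finset.sum_nonneg fun z _ => div_nonneg (sq_nonneg _) (hPhat y z)

theorem sq_sub_mulVec_le_chiSqRow_mul (hPhat : ∀ y z, 0 ≤ Phat y z)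
    (habs : ∀ y z, Phat y z ≠ P y z → 0 < Phat y z) (w : n → ℝ) (y : n) :
    ((P - Phat) *ᵥ w) y ^ 2 ≤ chiSqRow P Phat y * (Phat *ᵥ fun z => w z ^ 2) y := by
  refine Finset.sum_sq_le_sum_mul_sum_of_sq_le_mul _
    (fun z _ => div_nonneg (sq_nonneg _) (hPhat y z))
    (fun z _ => mul_nonneg (hPhat y z) (sq_nonneg _)) fun z _ => le_of_eq ?_
  rcases eq_or_ne (Phat y z) (P y z) with h | h
  · -- both sides vanish, the right one through `0 / 0 = 0` when `P̂ y z = 0`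
    simp [h]
  · have := (habs y z h).ne'
    simp only [Matrix.sub_apply]
    field_simp
    ring

theorem inv_one_sub_smul_mulVec_pow_four_le [DecidableEq n] {γ c : ℝ} {ρ : n → ℝ}
    (hPhat : Phat ∈ rowStochastic ℝ n) (hγ0 : 0 < γ) (hγ1 : γ < 1)
    (habs : ∀ y z, Phat y z ≠ P y z → 0 < Phat y z) (x : n)
    (hc : ∀ y, (1 - γ • Phat)⁻¹ x y ≤ c * ρ y / (1 - γ)) (w : n → ℝ) :
    ((1 - γ • Phat)⁻¹ *ᵥ ((P - Phat) *ᵥ w)) x ^ 4 ≤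
      c ^ 3 * (∑ y, ρ y * chiSqRow P Phat y) ^ 2 * (∑ y, ρ y * w y ^ 4) /
        (γ ^ 2 * (1 - γ) ^ 4) := by
  have hPhat0 : ∀ y z, 0 ≤ Phat y z := fun y z => nonneg_of_mem_rowStochastic hPhat
  set N := (1 - γ • Phat)⁻¹
  have hN (y) : 0 ≤ N x y := inv_one_sub_smul_nonneg hPhat hγ0.le hγ1 x y
  set χ := chiSqRow P Phat
  have hχ := chiSqRow_nonneg (P := P) hPhat0
  set m := Phat *ᵥ fun z => w z ^ 2
  have hm (y) : 0 ≤ m y := Finset.sum_nonneg fun z _ => mul_nonneg (hPhat0 y z) (sq_nonneg _)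
  have hCS : (N *ᵥ ((P - Phat) *ᵥ w)) x ^ 2 ≤ (∑ y, N x y * χ y) * ∑ y, N x y * m y :=
    Finset.sum_sq_le_sum_mul_sum_of_sq_le_mul _ (fun y _ => mul_nonneg (hN y) (hχ y))
      (fun y _ => mul_nonneg (hN y) (hm y)) fun y _ => by
        rw [mul_pow, mul_mul_mul_comm, ← sq]
        exact mul_le_mul_of_nonneg_left (sq_sub_mulVec_le_chiSqRow_mul hPhat0 habs w y)
          (sq_nonneg _)
  have hχle : ∑ y, N x y * χ y ≤ c * (∑ y, ρ y * χ y) / (1 - γ) := by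
    calc ∑ y, N x y * χ y ≤ ∑ y, c * ρ y / (1 - γ) * χ y := by
          gcongr with y; exacts [hχ y, hc y]
      _ = c * (∑ y, ρ y * χ y) / (1 - γ) := by
          rw [Finset.mul_sum, Finset.sum_div]
          exact Finset.sum_congr rfl fun y _ => by ring
  have hmle : ∑ y, N x y * m y ≤ γ⁻¹ * ∑ z, N x z * w z ^ 2 :=
    (le_inv_mul_iff₀ hγ0).2 <|
      smul_sum_inv_one_sub_smul_mul_mulVec_le hPhat hγ0.le hγ1 (fun z => sq_nonneg (w z)) x
  have hw2 : (∑ z, N x z * w z ^ 2) ^ 2 ≤ c * (∑ y, ρ y * w y ^ 4) / (1 - γ) ^ 2 := by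
    calc (∑ z, N x z * w z ^ 2) ^ 2 ≤ (1 - γ)⁻¹ * ∑ z, N x z * (w z ^ 2) ^ 2 :=
          sq_sum_inv_one_sub_smul_mul_le hPhat hγ0.le hγ1 _ x
      _ ≤ (1 - γ)⁻¹ * ∑ z, c * ρ z / (1 - γ) * (w z ^ 2) ^ 2 := by
          gcongr with z
          exact hc z
      _ = c * (∑ y, ρ y * w y ^ 4) / (1 - γ) ^ 2 := by
          rw [Finset.mul_sum, Finset.mul_sum, Finset.sum_div]
          exact Finset.sum_congr rfl fun z _ => by field_simp
  calc (N *ᵥ ((P - Phat) *ᵥ w)) x ^ 4 = ((N *ᵥ ((P - Phat) *ᵥ w)) x ^ 2) ^ 2 := by ring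
    _ ≤ (∑ y, N x y * χ y) ^ 2 * (∑ y, N x y * m y) ^ 2 := by
        rw [← mul_pow]; exact pow_le_pow_left₀ (sq_nonneg _) hCS 2
    _ ≤ (c * (∑ y, ρ y * χ y) / (1 - γ)) ^ 2 * ((γ⁻¹) ^ 2 * (∑ z, N x z * w z ^ 2) ^ 2) := by
        refine mul_le_mul (pow_le_pow_left₀ ?_ hχle 2) ?_ (sq_nonneg _) (sq_nonneg _)
        · exact Finset.sum_nonneg fun y _ => mul_nonneg (hN y) (hχ y)
        · rw [← mul_pow]
          exact pow_le_pow_left₀ (Finset.sum_nonneg fun y _ => mul_nonneg (hN y) (hm y)) hmle 2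
    _ ≤ (c * (∑ y, ρ y * χ y) / (1 - γ)) ^ 2 *
          ((γ⁻¹) ^ 2 * (c * (∑ y, ρ y * w y ^ 4) / (1 - γ) ^ 2)) := by gcongr
    _ = _ := by field_simp

end ChiSquare

section L4

variable {d : ℕ} {γ : ℝ} {P Phat : Matrix (Fin d) (Fin d) ℝ} {ρ : Fin d → ℝ}

noncomputable def concentrability (γ : ℝ) (Phat : Matrix (Fin d) (Fin d) ℝ) (ρ : Fin d → ℝ)
    (x : Fin d) : ℝ :=
  ⨆ y, eta γ Phat x y / ρ y

theorem eta_eq_mul_inv_one_sub_smul (hPhat : Phat ∈ rowStochastic ℝ (Fin d)) (hγ0 : 0 ≤ γ)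
    (hγ1 : γ < 1) (x y : Fin d) : eta γ Phat x y = (1 - γ) * (1 - γ • Phat)⁻¹ x y := by
  rw [eta, inv_one_sub_smul_apply hPhat hγ0 hγ1]

theorem inv_one_sub_smul_le_concentrability (hPhat : Phat ∈ rowStochastic ℝ (Fin d))
    (hγ0 : 0 ≤ γ) (hγ1 : γ < 1) (hρ : ∀ y, 0 < ρ y) (x y : Fin d) :
    (1 - γ • Phat)⁻¹ x y ≤ concentrability γ Phat ρ x * ρ y / (1 - γ) := by
  rw [le_div_iff₀ (sub_pos.2 hγ1), ← div_le_iff₀ (hρ y), mul_comm,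
    ← eta_eq_mul_inv_one_sub_smul hPhat hγ0 hγ1]
  exact le_ciSup (f := fun y => eta γ Phat x y / ρ y) (Finite.bddAbove_range _) y

theorem concentrability_nonneg (hPhat : Phat ∈ rowStochastic ℝ (Fin d))
    (hγ0 : 0 ≤ γ) (hγ1 : γ < 1) (hρ : ∀ y, 0 < ρ y) (x : Fin d) :
    0 ≤ concentrability γ Phat ρ x := by
  refine le_trans ?_ (le_ciSup (f := fun y => eta γ Phat x y / ρ y) (Finite.bddAbove_range _) x)
  rw [eta_eq_mul_inv_one_sub_smul hPhat hγ0 hγ1]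
  exact div_nonneg (mul_nonneg (sub_nonneg.2 hγ1.le) (inv_one_sub_smul_nonneg hPhat hγ0 hγ1 x x))
    (hρ x).le

theorem norm4_le_mul_of_sum_le {u w : Fin d → ℝ} {a : ℝ} (hρ : ∀ x, 0 ≤ ρ x) (ha : 0 ≤ a)
    (h : ∑ x, ρ x * u x ^ 4 ≤ a ^ 4 * ∑ x, ρ x * w x ^ 4) : norm4 ρ u ≤ a * norm4 ρ w := by
  have hw : 0 ≤ ∑ x, ρ x * w x ^ 4 := Finset.sum_nonneg fun x _ => mul_nonneg (hρ x) (by positivity)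
  calc norm4 ρ u ≤ (a ^ 4 * ∑ x, ρ x * w x ^ 4) ^ ((1 : ℝ) / 4) :=
        Real.rpow_le_rpow (Finset.sum_nonneg fun x _ => mul_nonneg (hρ x) (by positivity)) h
          (by norm_num)
    _ = a * norm4 ρ w := by
        rw [Real.mul_rpow (by positivity) hw, ← Real.rpow_natCast, ← Real.rpow_mul ha]
        norm_num [norm4]

theorem norm4_sub_le (hρ : ∀ x, 0 ≤ ρ x) (f g : Fin d → ℝ) :
    norm4 ρ (f - g) ≤ norm4 ρ f + norm4 ρ g := by
  have hnorm4 (h : Fin d → ℝ) :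
      norm4 ρ h = (∑ x, |ρ x ^ ((1 : ℝ) / 4) * h x| ^ (4 : ℝ)) ^ ((1 : ℝ) / 4) := by
    refine congrArg (· ^ _) (Finset.sum_congr rfl fun x _ => ?_)
    rw [abs_mul, Real.mul_rpow (abs_nonneg _) (abs_nonneg _),
      abs_of_nonneg (Real.rpow_nonneg (hρ x) _), ← Real.rpow_mul (hρ x),
      show (4 : ℝ) = (4 : ℕ) by norm_num, Real.rpow_natCast, Even.pow_abs (by decide)]
    norm_num
  have h := Real.Lp_add_le Finset.univ (fun x => ρ x ^ ((1 : ℝ) / 4) * f x)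
    (fun x => -(ρ x ^ ((1 : ℝ) / 4) * g x)) (p := 4) (by norm_num)
  simp only [abs_neg, ← sub_eq_add_neg, ← mul_sub] at h
  simpa only [hnorm4, Pi.sub_apply] using h

theorem norm4_inv_one_sub_smul_mulVec_le (hPhat : Phat ∈ rowStochastic ℝ (Fin d))
    (hγ0 : 0 < γ) (hγ1 : γ < 1) (hρ : ∀ y, 0 < ρ y)
    (habs : ∀ x y, Phat x y ≠ P x y → 0 < Phat x y) (w : Fin d → ℝ) :
    norm4 ρ ((1 - γ • Phat)⁻¹ *ᵥ (γ • ((P - Phat) *ᵥ w))) ≤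
      γ / (1 - γ) * √(√(Csq γ Phat ρ) * chiSq ρ P Phat) * norm4 ρ w := by
  have hc := concentrability_nonneg hPhat hγ0.le hγ1 hρ
  have hX : chiSq ρ P Phat = ∑ y, ρ y * chiSqRow P Phat y := rfl
  have hX0 : 0 ≤ chiSq ρ P Phat := Finset.sum_nonneg fun y _ => mul_nonneg (hρ y).le <|
    chiSqRow_nonneg (P := P) (Phat := Phat) (fun _ _ => nonneg_of_mem_rowStochastic hPhat) y
  have hCsq : Csq γ Phat ρ = 1 / γ ^ 2 * ∑ x, ρ x * concentrability γ Phat ρ x ^ 3 := rfl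
  have hCsq0 : 0 ≤ Csq γ Phat ρ := by
    rw [hCsq]
    exact mul_nonneg (by positivity)
      (Finset.sum_nonneg fun x _ => mul_nonneg (hρ x).le (pow_nonneg (hc x) 3))
  refine norm4_le_mul_of_sum_le (fun x => (hρ x).le) (by positivity) ?_
  have hpt (x : Fin d) := inv_one_sub_smul_mulVec_pow_four_le hPhat hγ0 hγ1 habs x
    (inv_one_sub_smul_le_concentrability hPhat hγ0.le hγ1 hρ x) w
  rw [← hX] at hpt
  set W4 := ∑ y, ρ y * w y ^ 4
  clear_value W4
  calc ∑ x, ρ x * ((1 - γ • Phat)⁻¹ *ᵥ (γ • ((P - Phat) *ᵥ w))) x ^ 4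
      = γ ^ 4 * ∑ x, ρ x * ((1 - γ • Phat)⁻¹ *ᵥ ((P - Phat) *ᵥ w)) x ^ 4 := by
        simp only [mulVec_smul, Pi.smul_apply, smul_eq_mul, mul_pow, Finset.mul_sum]
        exact Finset.sum_congr rfl fun x _ => by ring
    _ ≤ γ ^ 4 * ∑ x, ρ x *
          (concentrability γ Phat ρ x ^ 3 * chiSq ρ P Phat ^ 2 * W4 / (γ ^ 2 * (1 - γ) ^ 4)) := by
        gcongr with x
        · exact (hρ x).le
        · exact hpt x
    _ = γ ^ 4 * (chiSq ρ P Phat ^ 2 * W4 / (γ ^ 2 * (1 - γ) ^ 4)) *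
          ∑ x, ρ x * concentrability γ Phat ρ x ^ 3 := by
        rw [Finset.mul_sum, Finset.mul_sum]
        exact Finset.sum_congr rfl fun x _ => by ring
    _ = (γ / (1 - γ)) ^ 4 * (Csq γ Phat ρ * chiSq ρ P Phat ^ 2) * W4 := by
        rw [hCsq]
        field_simp
    _ = (γ / (1 - γ) * √(√(Csq γ Phat ρ) * chiSq ρ P Phat)) ^ 4 * W4 := by
        rw [mul_pow (γ / (1 - γ)), show (4 : ℕ) = 2 * 2 from rfl, pow_mul _ 2 2, pow_mul _ 2 2,
          Real.sq_sqrt (by positivity), mul_pow, Real.sq_sqrt hCsq0]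

end L4

theorem valueFn_sub_varga {d : ℕ} {γ : ℝ} {P Phat : Matrix (Fin d) (Fin d) ℝ}
    (hP : IsUnit (1 - γ • P).det) (hPhat : IsUnit (1 - γ • Phat).det) (r V : Fin d → ℝ) :
    valueFn γ P r - varga γ P Phat r V =
      (1 - γ • Phat)⁻¹ *ᵥ (γ • ((P - Phat) *ᵥ (valueFn γ P r - V))) := by
  have hbellman : (1 - γ • P) *ᵥ valueFn γ P r = r := by
    rw [valueFn, mulVec_mulVec, mul_nonsing_inv _ hP, one_mulVec]
  set Vπ := valueFn γ P r
  have hfix : (1 - γ • Phat) *ᵥ Vπ = r + γ • ((P - Phat) *ᵥ Vπ) := by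
    rw [show 1 - γ • Phat = (1 - γ • P) + γ • (P - Phat) by rw [smul_sub]; abel,
      add_mulVec, hbellman, smul_mulVec]
  calc Vπ - varga γ P Phat r V
      = (1 - γ • Phat)⁻¹ *ᵥ ((1 - γ • Phat) *ᵥ Vπ) - varga γ P Phat r V := by
        rw [mulVec_mulVec, nonsing_inv_mul _ hPhat, one_mulVec]
    _ = _ := by
        rw [varga, hfix, ← mulVec_sub, mulVec_sub (P - Phat), smul_sub, add_sub_add_left_eq_sub]

theorem le_pow_mul_add_of_le_mul_add {a : ℕ → ℝ} {g e : ℝ} (hg0 : 0 ≤ g) (hg1 : g ≠ 1)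
    (h : ∀ k, a (k + 1) ≤ g * a k + e) (k : ℕ) :
    a k ≤ g ^ k * a 0 + (1 - g ^ k) / (1 - g) * e := by
  induction k with
  | zero => simp
  | succ k ih =>
    calc a (k + 1) ≤ g * a k + e := h k
      _ ≤ g * (g ^ k * a 0 + (1 - g ^ k) / (1 - g) * e) + e := by gcongr
      _ = g ^ (k + 1) * a 0 + (1 - g ^ (k + 1)) / (1 - g) * e := by
        field_simp [sub_ne_zero.2 hg1.symm]
        ring

theorem osvi_pe_error_propagation_L4_general {d : ℕ} (γ : ℝ) (hγ0 : 0 < γ) (hγ1 : γ < 1)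
    (P Phat : Matrix (Fin d) (Fin d) ℝ)
    (hP : RowStochastic P) (hPhat : RowStochastic Phat)
    (ρ : Fin d → ℝ) (hρpos : ∀ x, 0 < ρ x)
    (habs : ∀ x y, Phat x y ≠ P x y → 0 < Phat x y)
    (r : Fin d → ℝ)
    (V : ℕ → Fin d → ℝ) (ε : ℕ → Fin d → ℝ) (e : ℝ)
    (hV : ∀ k, V (k + 1) = varga γ P Phat r (V k) + ε (k + 1))
    (hε : ∀ k, 1 ≤ k → norm4 ρ (ε k) ≤ e)
    (γ' : ℝ)
    (hγ'def : γ' = γ / (1 - γ) * Real.sqrt (Real.sqrt (Csq γ Phat ρ) * chiSq ρ P Phat))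
    (hγ'lt : γ' < 1) :
    ∀ k, norm4 ρ (valueFn γ P r - V k) ≤
      γ' ^ k * norm4 ρ (valueFn γ P r - V 0) + (1 - γ' ^ k) / (1 - γ') * e := by
  have hP' := mem_rowStochastic_iff_sum.2 hP
  have hPhat' := mem_rowStochastic_iff_sum.2 hPhat
  have hγ'0 : 0 ≤ γ' := by
    rw [hγ'def]
    exact mul_nonneg (div_nonneg hγ0.le (sub_pos.2 hγ1).le) (Real.sqrt_nonneg _)
  refine le_pow_mul_add_of_le_mul_add hγ'0 hγ'lt.ne fun k => ?_
  rw [hV k, ← sub_sub, valueFn_sub_varga (isUnit_det_one_sub_smul hP' hγ0.le hγ1)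
    (isUnit_det_one_sub_smul hPhat' hγ0.le hγ1)]
  refine (norm4_sub_le (fun x => (hρpos x).le) _ _).trans (add_le_add ?_ (hε _ k.succ_pos))
  rw [hγ'def]
  exact norm4_inv_one_sub_smul_mulVec_le hPhat' hγ0 hγ1 hρpos habs _

/-- Approximate OS-VI for policy evaluation, `L₄(ρ)` error propagation
(Theorem 1, `⋆ = 4,ρ`). -/
theorem osvi_pe_error_propagation_L4 {d : ℕ} (γ : ℝ) (hγ0 : 0 < γ) (hγ1 : γ < 1)
    (P Phat : Matrix (Fin d) (Fin d) ℝ)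
    (hP : RowStochastic P) (hPhat : RowStochastic Phat)
    (ρ : Fin d → ℝ) (hρpos : ∀ x, 0 < ρ x) (hρsum : ∑ x, ρ x = 1)
    (habs : ∀ x y, Phat x y ≠ P x y → 0 < Phat x y)
    (r : Fin d → ℝ)
    (V : ℕ → Fin d → ℝ) (ε : ℕ → Fin d → ℝ) (e : ℝ)
    (hV : ∀ k, V (k + 1) = varga γ P Phat r (V k) + ε (k + 1))
    (hε : ∀ k, 1 ≤ k → norm4 ρ (ε k) ≤ e)
    (γ' : ℝ)
    (hγ'def : γ' = γ / (1 - γ) * Real.sqrt (Real.sqrt (Csq γ Phat ρ) * chiSq ρ P Phat))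
    (hγ'lt : γ' < 1) :
    ∀ k, norm4 ρ (valueFn γ P r - V k) ≤
      γ' ^ k * norm4 ρ (valueFn γ P r - V 0) + (1 - γ' ^ k) / (1 - γ') * e :=
  osvi_pe_error_propagation_L4_general γ hγ0 hγ1 P Phat hP hPhat ρ hρpos habs r V ε e hV hε γ'
    hγ'def hγ'lt
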